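/- arXiv:2112.04898 — 7 statements merged into one kernel-verified Lean document; each statement's English description precedes it below -/
import Mathlib

section
/- Let f be continuous on [a,c], differentiable on (a,c) with f'(x) ≥ -1 for all x in (a,c), f(x) > x for all x in [a,c), and c the unique fixed point of f in [a,c]. Then for any x₀ ∈ [a,c), the sequence defined by x_{n+1} = (x_n + f(x_n))/2 converges to c. -/
/-!
Since `f' ≥ -1`, the map `t ↦ f t + t` is monotone, so `f t + t ≤ f c + c = 2c` on `[a, c]`.
Hence the averaged map `g t = (t + f t) / 2` sends `[a, c]` into itself and moves every point
to the right. The iterates therefore increase to a limit in `[a, c]`, which is a fixed point of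
`g`, i.e. of `f`; as `f t > t` on `[a, c)`, that limit is `c`.
-/

open Set Filter Topology Function

theorem isFixedPt_of_tendsto_of_continuousWithinAt {α : Type*} [TopologicalSpace α] [T2Space α]
    {g : α → α} {s : Set α} {x : ℕ → α} {L : α} (hx : Tendsto x atTop (𝓝 L))
    (hxs : ∀ n, x n ∈ s) (hrec : ∀ n, x (n + 1) = g (x n)) (hg : ContinuousWithinAt g s L) :
    IsFixedPt g L := by
  have hgx : Tendsto (fun n => g (x n)) atTop (𝓝 (g L)) :=
    hg.tendsto.comp (tendsto_nhdsWithin_iff.mpr ⟨hx, Eventually.of_forall hxs⟩)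
  refine tendsto_nhds_unique ?_ ((tendsto_add_atTop_iff_nat 1).mpr hx)
  simpa only [hrec] using hgx

theorem exists_isFixedPt_tendsto_of_le_self {g : ℝ → ℝ} {a c : ℝ}
    (hg : ContinuousOn g (Icc a c)) (hmaps : MapsTo g (Icc a c) (Icc a c))
    (hle : ∀ t ∈ Icc a c, t ≤ g t) {x : ℕ → ℝ} (hx0 : x 0 ∈ Icc a c)
    (hrec : ∀ n, x (n + 1) = g (x n)) :
    ∃ L ∈ Icc a c, IsFixedPt g L ∧ Tendsto x atTop (𝓝 L) := by
  have hmem : ∀ n, x n ∈ Icc a c := by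
    intro n
    induction n with
    | zero => exact hx0
    | succ n ih => exact hrec n ▸ hmaps ih
  have hmono : Monotone x := monotone_nat_of_le_succ fun n => hrec n ▸ hle _ (hmem n)
  have hbdd : BddAbove (range x) := ⟨c, by rintro _ ⟨n, rfl⟩; exact (hmem n).2⟩
  have hlim := tendsto_atTop_ciSup hmono hbdd
  have hL : ⨆ n, x n ∈ Icc a c := isClosed_Icc.mem_of_tendsto hlim (Eventually.of_forall hmem)
  exact ⟨_, hL, isFixedPt_of_tendsto_of_continuousWithinAt hlim hmem hrec (hg _ hL), hlim⟩

theorem add_self_le_of_neg_one_le_deriv {f : ℝ → ℝ} {a c : ℝ}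
    (hcont : ContinuousOn f (Icc a c)) (hdiff : ∀ x ∈ Ioo a c, DifferentiableAt ℝ f x)
    (hderiv : ∀ x ∈ Ioo a c, -1 ≤ deriv f x) {s t : ℝ} (hs : s ∈ Icc a c) (ht : t ∈ Icc a c)
    (hst : s ≤ t) : f s + s ≤ f t + t := by
  have hdiffOn : DifferentiableOn ℝ f (interior (Icc a c)) := by
    rw [interior_Icc]
    exact fun x hx => (hdiff x hx).differentiableWithinAt
  have := (convex_Icc a c).mul_sub_le_image_sub_of_le_deriv hcont hdiffOn
    (by rwa [interior_Icc]) s hs t ht hst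
  linarith

theorem stmt0_general (f : ℝ → ℝ) (a c : ℝ)
    (hcont : ContinuousOn f (Set.Icc a c))
    (hdiff : ∀ x ∈ Set.Ioo a c, DifferentiableAt ℝ f x)
    (hderiv : ∀ x ∈ Set.Ioo a c, -1 ≤ deriv f x)
    (hgt : ∀ x ∈ Set.Ico a c, f x > x)
    (hfix : f c = c)
    (x : ℕ → ℝ) (hx0 : x 0 ∈ Set.Ico a c)
    (hrec : ∀ n, x (n + 1) = (x n + f (x n)) / 2) :
    Filter.Tendsto x Filter.atTop (nhds c) := by
  have hc : c ∈ Icc a c := right_mem_Icc.mpr (hx0.1.trans_lt hx0.2).le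
  have hle : ∀ t ∈ Icc a c, t ≤ f t := fun t ht =>
    ht.2.eq_or_lt.elim (fun h => h ▸ hfix.ge) fun h => (hgt t ⟨ht.1, h⟩).le
  have hmaps : MapsTo (fun t => (t + f t) / 2) (Icc a c) (Icc a c) := fun t ht => by
    have hsum := add_self_le_of_neg_one_le_deriv hcont hdiff hderiv ht hc ht.2
    constructor <;> linarith [ht.1, hle t ht]
  obtain ⟨L, hL, hLfix, hlim⟩ := exists_isFixedPt_tendsto_of_le_self (g := fun t => (t + f t) / 2)
    ((continuousOn_id.add hcont).div_const 2) hmaps (fun t ht => by linarith [hle t ht])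
    (Ico_subset_Icc_self hx0) hrec
  obtain rfl : L = c := by
    by_contra hne
    have hfL : (L + f L) / 2 = L := hLfix
    linarith [hgt L ⟨hL.1, hL.2.lt_of_ne hne⟩]
  exact hlim

theorem stmt0 (f : ℝ → ℝ) (a c : ℝ) (hac : a < c)
    (hcont : ContinuousOn f (Set.Icc a c))
    (hdiff : ∀ x ∈ Set.Ioo a c, DifferentiableAt ℝ f x)
    (hderiv : ∀ x ∈ Set.Ioo a c, -1 ≤ deriv f x)
    (hgt : ∀ x ∈ Set.Ico a c, f x > x)
    (hfix : f c = c)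
    (huniq : ∀ x ∈ Set.Icc a c, f x = x → x = c)
    (x : ℕ → ℝ) (hx0 : x 0 ∈ Set.Ico a c)
    (hrec : ∀ n, x (n + 1) = (x n + f (x n)) / 2) :
    Filter.Tendsto x Filter.atTop (nhds c) :=
  stmt0_general f a c hcont hdiff hderiv hgt hfix x hx0 hrec
end

section
/- Let f be continuous on [c,b], differentiable on (c,b) with f'(x) ≥ -1 for all x in (c,b), f(x) < x for all x in (c,b], and c the unique fixed point of f in [c,b]. Then for any x₀ ∈ (c,b], the sequence defined by x_{n+1} = (x_n + f(x_n))/2 converges to c. -/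
theorem stmt1 (f : ℝ → ℝ) (c b : ℝ) (hcb : c < b)
    (hcont : ContinuousOn f (Set.Icc c b))
    (hdiff : ∀ x ∈ Set.Ioo c b, DifferentiableAt ℝ f x)
    (hderiv : ∀ x ∈ Set.Ioo c b, -1 ≤ deriv f x)
    (hlt : ∀ x ∈ Set.Ioc c b, f x < x)
    (hfix : f c = c)
    (huniq : ∀ x ∈ Set.Icc c b, f x = x → x = c)
    (x : ℕ → ℝ) (hx0 : x 0 ∈ Set.Ioc c b)
    (hrec : ∀ n, x (n + 1) = (x n + f (x n)) / 2) :
    Filter.Tendsto x Filter.atTop (nhds c) := by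
  have key : ∀ y ∈ Set.Icc c b, c ≤ (y + f y) / 2 ∧ (y + f y) / 2 ≤ y := by
    intro y hy
    rcases eq_or_lt_of_le hy.1 with h | h
    · rw [← h, hfix]; constructor <;> linarith
    · have hlt' := hlt y ⟨h, hy.2⟩
      refine ⟨?_, by linarith⟩
      obtain ⟨ξ, hξ, hd⟩ := exists_deriv_eq_slope f h
        (hcont.mono (Set.Icc_subset_Icc le_rfl hy.2))
        (fun z hz => (hdiff z ⟨hz.1, lt_of_lt_of_le hz.2 hy.2⟩).differentiableWithinAt)
      have h1 : -1 ≤ deriv f ξ := hderiv ξ ⟨hξ.1, lt_of_lt_of_le hξ.2 hy.2⟩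
      rw [hd, hfix] at h1
      have hpos : (0:ℝ) < y - c := sub_pos.mpr h
      rw [le_div_iff₀ hpos] at h1
      linarith
  have hmem : ∀ n, x n ∈ Set.Icc c b := by
    intro n; induction n with
    | zero => exact ⟨le_of_lt hx0.1, hx0.2⟩
    | succ n ih =>
      obtain ⟨h1, h2⟩ := key (x n) ih
      rw [hrec n]
      exact ⟨h1, le_trans h2 ih.2⟩
  have hanti : Antitone x := antitone_nat_of_succ_le fun n => by
    rw [hrec n]; exact (key (x n) (hmem n)).2
  have hbdd : BddBelow (Set.range x) := ⟨c, fun y ⟨n, hn⟩ => hn ▸ (hmem n).1⟩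
  have htend : Filter.Tendsto x Filter.atTop (nhds (⨅ n, x n)) :=
    tendsto_atTop_ciInf hanti hbdd
  set L := ⨅ n, x n with hLdef
  have hLmem : L ∈ Set.Icc c b := ⟨le_ciInf fun n => (hmem n).1,
    le_trans (ciInf_le hbdd 0) (hmem 0).2⟩
  have hfx : Filter.Tendsto (fun n => f (x n)) Filter.atTop (nhds (f L)) := by
    have hcw := (hcont L hLmem).tendsto
    exact hcw.comp (tendsto_nhdsWithin_of_tendsto_nhds_of_eventually_within _ htend
      (Filter.Eventually.of_forall hmem))
  have h1 : Filter.Tendsto (fun n => x (n + 1)) Filter.atTop (nhds ((L + f L) / 2)) := by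
    simp_rw [hrec]
    exact (htend.add hfx).div_const 2
  have h2 : Filter.Tendsto (fun n => x (n + 1)) Filter.atTop (nhds L) :=
    htend.comp (Filter.tendsto_add_atTop_nat 1)
  have hLe : L = (L + f L) / 2 := tendsto_nhds_unique h2 h1
  have hfL : f L = L := by linarith
  have hLc : L = c := huniq L hLmem hfL
  rwa [hLc] at htend
end

section
/- Under the hypotheses of Lemma 1 (f continuous on [a,c], differentiable on (a,c), f' ≥ -1, f(x) > x on [a,c), c the unique fixed point), the iterative sequence x_{n+1} = (x_n + f(x_n))/2 with x₀ ∈ [a,c) is monotonically nondecreasing. -/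
/-! Since `f' ≥ -1`, the function `t ↦ f t + t` is nondecreasing on `[a, c]`, so
`t + f t ≤ c + f c = 2c` there: the averaged map `t ↦ (t + f t) / 2` keeps `[a, c]` invariant.
On `[a, c]` we also have `f t ≥ t`, so this map moves every point to the right, and the orbit
of `x₀` increases. -/

open Set

theorem monotoneOn_add_id_of_neg_one_le_deriv {f : ℝ → ℝ} {a c : ℝ}
    (hcont : ContinuousOn f (Icc a c))
    (hdiff : ∀ x ∈ Ioo a c, DifferentiableAt ℝ f x)
    (hderiv : ∀ x ∈ Ioo a c, -1 ≤ deriv f x) :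
    MonotoneOn (fun t => f t + t) (Icc a c) := by
  refine monotoneOn_of_deriv_nonneg (convex_Icc a c) (hcont.add continuousOn_id) ?_ ?_
  · rw [interior_Icc]
    exact fun t ht => ((hdiff t ht).add differentiableAt_id).differentiableWithinAt
  · rw [interior_Icc]
    intro t ht
    rw [((hdiff t ht).hasDerivAt.fun_add (hasDerivAt_id' t)).deriv]
    linarith [hderiv t ht]

theorem mapsTo_average_Icc {f : ℝ → ℝ} {a c : ℝ}
    (hmono : MonotoneOn (fun t => f t + t) (Icc a c))
    (hge : ∀ t ∈ Icc a c, t ≤ f t) (hfix : f c = c) :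
    MapsTo (fun t => (t + f t) / 2) (Icc a c) (Icc a c) := by
  intro t ht
  have hc : c ∈ Icc a c := ⟨ht.1.trans ht.2, le_rfl⟩
  have hsum : f t + t ≤ f c + c := hmono ht hc ht.2
  constructor <;> linarith [hge t ht, ht.1]

theorem monotone_of_mapsTo_of_le_apply {α : Type*} [Preorder α] {s : Set α} {T : α → α}
    {x : ℕ → α} (hT : MapsTo T s s) (hle : ∀ t ∈ s, t ≤ T t) (h0 : x 0 ∈ s)
    (hrec : ∀ n, x (n + 1) = T (x n)) : Monotone x := by
  have hmem : ∀ n, x n ∈ s := by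
    intro n
    induction n with
    | zero => exact h0
    | succ n ih => exact hrec n ▸ hT ih
  exact monotone_nat_of_le_succ fun n => hrec n ▸ hle _ (hmem n)

theorem stmt2_general (f : ℝ → ℝ) (a c : ℝ)
    (hcont : ContinuousOn f (Set.Icc a c))
    (hdiff : ∀ x ∈ Set.Ioo a c, DifferentiableAt ℝ f x)
    (hderiv : ∀ x ∈ Set.Ioo a c, -1 ≤ deriv f x)
    (hgt : ∀ x ∈ Set.Ico a c, f x > x)
    (hfix : f c = c)
    (x : ℕ → ℝ) (hx0 : x 0 ∈ Set.Ico a c)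
    (hrec : ∀ n, x (n + 1) = (x n + f (x n)) / 2) :
    Monotone x := by
  have hge : ∀ t ∈ Icc a c, t ≤ f t := by
    rintro t ⟨hat, htc⟩
    rcases htc.lt_or_eq with htc | rfl
    · exact (hgt t ⟨hat, htc⟩).le
    · exact hfix.ge
  refine monotone_of_mapsTo_of_le_apply
    (mapsTo_average_Icc (monotoneOn_add_id_of_neg_one_le_deriv hcont hdiff hderiv) hge hfix)
    (fun t ht => ?_) (Ico_subset_Icc_self hx0) hrec
  linarith [hge t ht]

theorem stmt2 (f : ℝ → ℝ) (a c : ℝ) (hac : a < c)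
    (hcont : ContinuousOn f (Set.Icc a c))
    (hdiff : ∀ x ∈ Set.Ioo a c, DifferentiableAt ℝ f x)
    (hderiv : ∀ x ∈ Set.Ioo a c, -1 ≤ deriv f x)
    (hgt : ∀ x ∈ Set.Ico a c, f x > x)
    (hfix : f c = c)
    (huniq : ∀ x ∈ Set.Icc a c, f x = x → x = c)
    (x : ℕ → ℝ) (hx0 : x 0 ∈ Set.Ico a c)
    (hrec : ∀ n, x (n + 1) = (x n + f (x n)) / 2) :
    Monotone x :=
  stmt2_general f a c hcont hdiff hderiv hgt hfix x hx0 hrec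
end

section
/- Let f : [a,c] → ℝ be twice differentiable on (a,c) with c the unique root of f in [a,c], f(x)·f''(x) ≥ 0 on (a,c), f(x)·f'(x) < 0 on [a,c), and f'(x) ≠ 0 on (a,c) (with nonzero one-sided derivatives at a and c). Then for any x₀ ∈ [a,c], the Newton-Raphson sequence x_{n+1} = x_n − f(x_n)/f'(x_n) converges to c. -/
open Set

private lemma newton_step (f : ℝ → ℝ) (a c : ℝ) (hac : a < c)
    (hd1 : ∀ x ∈ Ioo a c, DifferentiableAt ℝ f x)
    (hd2 : ∀ x ∈ Ioo a c, DifferentiableAt ℝ (deriv f) x)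
    (hroot : f c = 0)
    (hconv : ∀ x ∈ Ioo a c, 0 ≤ deriv (deriv f) x)
    (hpos : ∀ x ∈ Ico a c, 0 < f x)
    (hneg : ∀ x ∈ Ico a c, deriv f x < 0)
    (hcont : ContinuousOn f (Icc a c)) :
    ∀ t ∈ Ico a c, t < t - f t / deriv f t ∧ t - f t / deriv f t ≤ c := by
  have hdiff : ∀ t ∈ Ico a c, DifferentiableAt ℝ f t := by
    intro t ht
    rcases eq_or_lt_of_le ht.1 with h | h
    · by_contra hnd
      have : deriv f t = 0 := deriv_zero_of_not_differentiableAt hnd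
      exact absurd this (ne_of_lt (hneg t ht))
    · exact hd1 t ⟨h, ht.2⟩
  have hmono : MonotoneOn (deriv f) (Ioo a c) := by
    apply monotoneOn_of_deriv_nonneg (convex_Ioo a c)
    · exact fun s hs => ((hd2 s hs).continuousAt).continuousWithinAt
    · rw [interior_Ioo]; exact fun s hs => (hd2 s hs).differentiableWithinAt
    · rw [interior_Ioo]; exact fun s hs => hconv s hs
  have hcvx : ConvexOn ℝ (Icc a c) f := by
    apply MonotoneOn.convexOn_of_deriv (convex_Icc a c) hcont
    · rw [interior_Icc]; exact fun s hs => (hd1 s hs).differentiableWithinAt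
    · rw [interior_Icc]; exact hmono
  intro t ht
  have hft := hpos t ht
  have hd := hneg t ht
  have hct : (0:ℝ) < c - t := by linarith [ht.2]
  constructor
  · have : f t / deriv f t < 0 := div_neg_of_pos_of_neg hft hd
    linarith
  · have hs : deriv f t ≤ (f c - f t) / (c - t) := by
      have := hcvx.deriv_le_slope ⟨ht.1, ht.2.le⟩ (right_mem_Icc.2 hac.le) ht.2 (hdiff t ht)
      simpa [slope_def_field] using this
    rw [hroot] at hs
    have h1 : deriv f t * (c - t) ≤ 0 - f t := (le_div_iff₀ hct).mp hs
    have h2 : -f t / deriv f t ≤ c - t := by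
      rw [div_le_iff_of_neg hd]
      nlinarith
    have h3 : t - f t / deriv f t = t + -f t / deriv f t := by ring
    linarith

theorem stmt4 (f : ℝ → ℝ) (a c : ℝ) (hac : a < c)
    (hd1 : ∀ x ∈ Set.Ioo a c, DifferentiableAt ℝ f x)
    (hd2 : ∀ x ∈ Set.Ioo a c, DifferentiableAt ℝ (deriv f) x)
    (hroot : f c = 0)
    (huniq : ∀ x ∈ Set.Icc a c, f x = 0 → x = c)
    (hff'' : ∀ x ∈ Set.Ioo a c, 0 ≤ f x * deriv (deriv f) x)
    (hff' : ∀ x ∈ Set.Ico a c, f x * deriv f x < 0)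
    (hne : ∀ x ∈ Set.Ioo a c, deriv f x ≠ 0)
    (ha : derivWithin f (Set.Ici a) a ≠ 0)
    (hc : derivWithin f (Set.Iic c) c ≠ 0)
    (x : ℕ → ℝ) (hx0 : x 0 ∈ Set.Icc a c)
    (hrec : ∀ n, x (n + 1) = x n - f (x n) / deriv f (x n)) :
    Filter.Tendsto x Filter.atTop (nhds c) := by
  -- differentiability at a
  have hda : DifferentiableAt ℝ f a := by
    by_contra hnd
    have h0 : deriv f a = 0 := deriv_zero_of_not_differentiableAt hnd
    have := hff' a ⟨le_refl a, hac⟩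
    rw [h0] at this; simp at this
  -- continuity on Icc
  have hcont : ContinuousOn f (Icc a c) := by
    intro t ht
    rcases eq_or_lt_of_le ht.2 with h | h
    · subst h
      have : DifferentiableWithinAt ℝ f (Iic t) t := by
        by_contra hnd
        exact hc (derivWithin_zero_of_not_differentiableWithinAt hnd)
      exact (this.continuousWithinAt).mono (Icc_subset_Iic_self)
    rcases eq_or_lt_of_le ht.1 with h' | h'
    · exact (h' ▸ hda.continuousAt).continuousWithinAt
    · exact ((hd1 t ⟨h', h⟩).continuousAt).continuousWithinAt
  -- f nonzero on Ico
  have hfne : ∀ t ∈ Ico a c, f t ≠ 0 := by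
    intro t ht h0
    exact absurd (huniq t ⟨ht.1, ht.2.le⟩ h0) (ne_of_lt ht.2)
  -- constant sign of f on Ico
  have hsign : (∀ t ∈ Ico a c, 0 < f t) ∨ (∀ t ∈ Ico a c, f t < 0) := by
    by_cases hfa : 0 < f a
    · left
      intro t ht
      by_contra hle
      push_neg at hle
      have hft : f t < 0 := lt_of_le_of_ne hle (hfne t ht)
      have hsub : Icc (f t) (f a) ⊆ f '' Icc a t :=
        intermediate_value_Icc' ht.1 (hcont.mono (Icc_subset_Icc le_rfl ht.2.le))
      obtain ⟨z, hz, hz0⟩ := hsub ⟨hft.le, hfa.le⟩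
      exact absurd (huniq z ⟨hz.1, hz.2.trans ht.2.le⟩ hz0)
        (ne_of_lt (lt_of_le_of_lt hz.2 ht.2))
    · right
      have hfa' : f a < 0 :=
        lt_of_le_of_ne (not_lt.mp hfa) (hfne a ⟨le_refl a, hac⟩)
      intro t ht
      by_contra hle
      push_neg at hle
      have hft : 0 < f t := lt_of_le_of_ne (by linarith) (Ne.symm (hfne t ht))
      have hsub : Icc (f a) (f t) ⊆ f '' Icc a t :=
        intermediate_value_Icc ht.1 (hcont.mono (Icc_subset_Icc le_rfl ht.2.le))
      obtain ⟨z, hz, hz0⟩ := hsub ⟨hfa'.le, hft.le⟩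
      exact absurd (huniq z ⟨hz.1, hz.2.trans ht.2.le⟩ hz0)
        (ne_of_lt (lt_of_le_of_lt hz.2 ht.2))
  -- key stepping property
  have hstep : ∀ t ∈ Ico a c, t < t - f t / deriv f t ∧ t - f t / deriv f t ≤ c := by
    rcases hsign with hpos | hnegf
    · apply newton_step f a c hac hd1 hd2 hroot
      · intro s hs
        have h1 := hff'' s hs
        have h2 := hpos s ⟨hs.1.le, hs.2⟩
        nlinarith
      · exact hpos
      · intro s hs
        have h1 := hff' s hs
        have h2 := hpos s hs
        nlinarith
      · exact hcont
    · have hgd : (deriv fun y => -f y) = fun y => -deriv f y := funext fun y => deriv.neg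
      have key := newton_step (fun y => -f y) a c hac
        (fun s hs => (hd1 s hs).neg)
        (by rw [hgd]; exact fun s hs => (hd2 s hs).neg)
        (by simp [hroot])
        (by
          intro s hs
          have hr : (deriv (deriv fun y => -f y)) s = -(deriv (deriv f) s) := by
            rw [hgd]; exact deriv.neg
          rw [hr]
          have h1 := hff'' s hs
          have h2 := hnegf s ⟨hs.1.le, hs.2⟩
          nlinarith)
        (fun s hs => by simpa using (hnegf s hs))
        (by
          intro s hs
          rw [hgd]
          have h1 := hff' s hs
          have h2 := hnegf s hs
          simp only [neg_neg]
          nlinarith)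
        (hcont.neg)
      intro t ht
      have := key t ht
      rw [hgd] at this
      simpa [neg_div_neg_eq] using this
  -- invariant and monotonicity
  have hmem : ∀ n, x n ∈ Icc a c := by
    intro n
    induction n with
    | zero => exact hx0
    | succ k ih =>
      rcases eq_or_lt_of_le ih.2 with h | h
      · rw [hrec, h, hroot, zero_div, sub_zero]
        exact ⟨hac.le, le_refl c⟩
      · obtain ⟨h1, h2⟩ := hstep (x k) ⟨ih.1, h⟩
        rw [hrec]
        exact ⟨le_of_lt (lt_of_le_of_lt ih.1 h1), h2⟩
  have hmono : Monotone x := by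
    apply monotone_nat_of_le_succ
    intro n
    rcases eq_or_lt_of_le (hmem n).2 with h | h
    · rw [hrec, h, hroot, zero_div, sub_zero]
    · rw [hrec]
      exact (hstep (x n) ⟨(hmem n).1, h⟩).1.le
  have hbdd : BddAbove (Set.range x) := by
    refine ⟨c, ?_⟩
    rintro _ ⟨n, rfl⟩
    exact (hmem n).2
  set L := ⨆ n, x n with hLdef
  have hL : Filter.Tendsto x Filter.atTop (nhds L) := tendsto_atTop_ciSup hmono hbdd
  have hLc : L ≤ c := ciSup_le fun n => (hmem n).2
  have hxle : ∀ n, x n ≤ L := fun n => le_ciSup hbdd n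
  rcases eq_or_lt_of_le hLc with hEq | hLt
  · rwa [hEq] at hL
  exfalso
  have hLa : a ≤ L := le_trans (hmem 0).1 (hxle 0)
  rcases eq_or_lt_of_le hLa with hEq' | hLt'
  · -- L = a : contradiction since x 1 > x 0 = a
    have hx0a : x 0 = a := le_antisymm (hEq' ▸ hxle 0) (hmem 0).1
    have h01 : x 0 < x 1 := by
      rw [hrec]
      exact (hstep (x 0) ⟨(hmem 0).1, by rw [hx0a]; exact hac⟩).1
    have := hxle 1
    rw [← hEq'] at this
    linarith
  · -- a < L < c : take limits in the recursion
    have hLmem : L ∈ Ioo a c := ⟨hLt', hLt⟩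
    have hdfL := hd1 L hLmem
    have hd2L := hd2 L hLmem
    have hneL := hne L hLmem
    have hcg : ContinuousAt (fun t => t - f t / deriv f t) L :=
      continuousAt_id.sub ((hdfL.continuousAt).div (hd2L.continuousAt) hneL)
    have h1 : Filter.Tendsto (fun n => x (n + 1)) Filter.atTop (nhds L) :=
      hL.comp (Filter.tendsto_add_atTop_nat 1)
    have h2 : Filter.Tendsto (fun n => x (n + 1)) Filter.atTop
        (nhds (L - f L / deriv f L)) :=
      (hcg.tendsto.comp hL).congr fun n => (hrec n).symm
    have hfix : L = L - f L / deriv f L := tendsto_nhds_unique h1 h2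
    have : f L / deriv f L = 0 := by linarith
    have hfL : f L = 0 := by
      rcases div_eq_zero_iff.mp this with h | h
      · exact h
      · exact absurd h hneL
    exact absurd (huniq L ⟨hLt'.le, hLt.le⟩ hfL) (ne_of_lt hLt)
end

section
/- Let f : [c,b] → ℝ be twice differentiable on (c,b) with c the unique root of f in [c,b], f(x)·f''(x) ≥ 0 on (c,b), f(x)·f'(x) > 0 on (c,b], and f'(x) ≠ 0 on (c,b) (with nonzero one-sided derivatives at c and b). Then for any x₀ ∈ [c,b], the Newton-Raphson sequence x_{n+1} = x_n − f(x_n)/f'(x_n) converges to c. -/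
open Set Filter

private lemma newton_key (f : ℝ → ℝ) (c b : ℝ) (hcb : c < b)
    (hd1 : ∀ x ∈ Set.Ioo c b, DifferentiableAt ℝ f x)
    (hd2 : ∀ x ∈ Set.Ioo c b, DifferentiableAt ℝ (deriv f) x)
    (hroot : f c = 0)
    (hcont : ContinuousOn f (Set.Icc c b))
    (hpos : ∀ x ∈ Set.Ioc c b, 0 < f x)
    (hf'pos : ∀ x ∈ Set.Ioc c b, 0 < deriv f x)
    (hf'' : ∀ x ∈ Set.Ioo c b, 0 ≤ deriv (deriv f) x)
    (x : ℕ → ℝ) (hx0 : x 0 ∈ Set.Icc c b)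
    (hrec : ∀ n, x (n + 1) = x n - f (x n) / deriv f (x n)) :
    Filter.Tendsto x Filter.atTop (nhds c) := by
  -- f is differentiable at every point of (c, b]
  have hdiff : ∀ t ∈ Set.Ioc c b, DifferentiableAt ℝ f t := by
    intro t ht
    rcases eq_or_lt_of_le ht.2 with h | h
    · by_contra hnd
      have := deriv_zero_of_not_differentiableAt hnd
      exact (hf'pos t ht).ne' this
    · exact hd1 t ⟨ht.1, h⟩
  -- f is convex on [c, b]
  have hconv : ConvexOn ℝ (Set.Icc c b) f := by
    apply convexOn_of_deriv2_nonneg (convex_Icc c b) hcont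
    · rw [interior_Icc]
      exact fun t ht => (hd1 t ht).differentiableWithinAt
    · rw [interior_Icc]
      exact fun t ht => (hd2 t ht).differentiableWithinAt
    · rw [interior_Icc]
      intro t ht
      exact hf'' t ht
  -- the Newton step
  have hstep : ∀ t ∈ Set.Ioc c b, c ≤ t - f t / deriv f t ∧ t - f t / deriv f t < t := by
    intro t ht
    have hft : 0 < f t := hpos t ht
    have hdt : 0 < deriv f t := hf'pos t ht
    constructor
    · have hslope : slope f c t ≤ deriv f t :=
        hconv.slope_le_deriv (Set.left_mem_Icc.2 hcb.le)
          ⟨ht.1.le, ht.2⟩ ht.1 (hdiff t ht)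
      rw [slope_def_field, hroot, sub_zero, div_le_iff₀ (by linarith [ht.1])] at hslope
      have h2 : f t / deriv f t ≤ t - c := by
        rw [div_le_iff₀ hdt]
        nlinarith
      linarith
    · have : 0 < f t / deriv f t := div_pos hft hdt
      linarith
  -- the sequence remains in [c, b]
  have hmem : ∀ n, x n ∈ Set.Icc c b := by
    intro n
    induction n with
    | zero => exact hx0
    | succ n ih =>
      rcases eq_or_lt_of_le ih.1 with h | h
      · rw [hrec n, ← h, hroot]
        simp [← h, hcb.le]
      · have h2 := hstep (x n) ⟨h, ih.2⟩
        rw [hrec n]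
        exact ⟨h2.1, le_trans h2.2.le ih.2⟩
  by_cases hE : ∃ N, x N = c
  · obtain ⟨N, hN⟩ := hE
    have hconst : ∀ n, N ≤ n → x n = c := by
      intro n hn
      induction n with
      | zero => simpa [Nat.le_zero.1 hn] using hN
      | succ n ih =>
        rcases Nat.lt_or_ge N (n + 1) with h | h
        · have hxn : x n = c := ih (Nat.lt_succ_iff.1 h)
          rw [hrec n, hxn, hroot]
          simp
        · obtain rfl : N = n + 1 := le_antisymm hn h
          exact hN
    refine tendsto_const_nhds.congr' ?_
    filter_upwards [eventually_ge_atTop N] with n hn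
    exact (hconst n hn).symm
  · push_neg at hE
    have hall : ∀ n, x n ∈ Set.Ioc c b := fun n =>
      ⟨lt_of_le_of_ne (hmem n).1 (fun h => hE n h.symm), (hmem n).2⟩
    have hdec : ∀ n, x (n + 1) < x n := by
      intro n
      rw [hrec n]
      exact (hstep (x n) (hall n)).2
    have hanti : StrictAnti x := strictAnti_nat_of_succ_lt hdec
    have hbdd : BddBelow (Set.range x) := ⟨c, fun y ⟨n, hn⟩ => hn ▸ (hall n).1.le⟩
    have htend : Filter.Tendsto x Filter.atTop (nhds (⨅ n, x n)) :=
      tendsto_atTop_ciInf hanti.antitone hbdd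
    set L := ⨅ n, x n with hL
    have hcL : c ≤ L := le_ciInf fun n => (hall n).1.le
    rcases eq_or_lt_of_le hcL with h | h
    · rwa [← h] at htend
    · exfalso
      have hLb : L < b := lt_of_le_of_lt (ciInf_le hbdd 1) (lt_of_lt_of_le (hdec 0) (hall 0).2)
      have hLmem : L ∈ Set.Ioo c b := ⟨h, hLb⟩
      have hfc : ContinuousAt f L := (hd1 L hLmem).continuousAt
      have hdc : ContinuousAt (deriv f) L := (hd2 L hLmem).continuousAt
      have hdL : deriv f L ≠ 0 := (hf'pos L ⟨h, hLb.le⟩).ne'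
      have h1 : Filter.Tendsto (fun n => f (x n) / deriv f (x n)) Filter.atTop
          (nhds (f L / deriv f L)) :=
        ((hfc.tendsto.comp htend).div (hdc.tendsto.comp htend) hdL)
      have h2 : Filter.Tendsto (fun n => x n - x (n + 1)) Filter.atTop (nhds 0) := by
        have := htend.sub (htend.comp (tendsto_add_atTop_nat 1))
        simpa using this
      have h3 : (fun n => x n - x (n + 1)) = fun n => f (x n) / deriv f (x n) := by
        funext n
        rw [hrec n]
        ring
      rw [h3] at h2
      have h4 : f L / deriv f L = 0 := tendsto_nhds_unique h1 h2
      have h5 : f L = 0 := by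
        rcases div_eq_zero_iff.1 h4 with h | h
        · exact h
        · exact absurd h hdL
      exact (hpos L ⟨h, hLb.le⟩).ne' h5

theorem stmt5 (f : ℝ → ℝ) (c b : ℝ) (hcb : c < b)
    (hd1 : ∀ x ∈ Set.Ioo c b, DifferentiableAt ℝ f x)
    (hd2 : ∀ x ∈ Set.Ioo c b, DifferentiableAt ℝ (deriv f) x)
    (hroot : f c = 0)
    (huniq : ∀ x ∈ Set.Icc c b, f x = 0 → x = c)
    (hff'' : ∀ x ∈ Set.Ioo c b, 0 ≤ f x * deriv (deriv f) x)
    (hff' : ∀ x ∈ Set.Ioc c b, 0 < f x * deriv f x)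
    (hne : ∀ x ∈ Set.Ioo c b, deriv f x ≠ 0)
    (hc : derivWithin f (Set.Ici c) c ≠ 0)
    (hb : derivWithin f (Set.Iic b) b ≠ 0)
    (x : ℕ → ℝ) (hx0 : x 0 ∈ Set.Icc c b)
    (hrec : ∀ n, x (n + 1) = x n - f (x n) / deriv f (x n)) :
    Filter.Tendsto x Filter.atTop (nhds c) := by
  -- continuity on [c, b]
  have hdc : DifferentiableWithinAt ℝ f (Set.Ici c) c := by
    by_contra hnd
    exact hc (derivWithin_zero_of_not_differentiableWithinAt hnd)
  have hdb : DifferentiableWithinAt ℝ f (Set.Iic b) b := by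
    by_contra hnd
    exact hb (derivWithin_zero_of_not_differentiableWithinAt hnd)
  have hcont : ContinuousOn f (Set.Icc c b) := by
    intro t ht
    rcases eq_or_lt_of_le ht.1 with h | h1
    · rw [← h]
      exact hdc.continuousWithinAt.mono Set.Icc_subset_Ici_self
    · rcases eq_or_lt_of_le ht.2 with h | h2
      · rw [h]
        exact (hdb.continuousWithinAt.mono Set.Icc_subset_Iic_self)
      · exact ((hd1 t ⟨h1, h2⟩).continuousAt).continuousWithinAt
  -- nonvanishing on (c, b]
  have hfne : ∀ t ∈ Set.Ioc c b, f t ≠ 0 := by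
    intro t ht h0
    have := huniq t ⟨ht.1.le, ht.2⟩ h0
    exact ht.1.ne' this
  -- sign dichotomy via IVT
  have hsign : (∀ t ∈ Set.Ioc c b, 0 < f t) ∨ (∀ t ∈ Set.Ioc c b, f t < 0) := by
    rcases lt_or_gt_of_ne (hfne b ⟨hcb, le_refl b⟩) with hbneg | hbpos
    · right
      intro t ht
      rcases lt_or_gt_of_ne (hfne t ht) with h | h
      · exact h
      · exfalso
        have hsub : Set.Icc t b ⊆ Set.Icc c b := Set.Icc_subset_Icc ht.1.le (le_refl b)
        have hivt := intermediate_value_Icc' ht.2 (hcont.mono hsub)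
        have h0 : (0 : ℝ) ∈ Set.Icc (f b) (f t) := ⟨hbneg.le, h.le⟩
        obtain ⟨s, hs, hfs⟩ := hivt h0
        have heq := huniq s (hsub hs) hfs
        have hsc : c < s := lt_of_lt_of_le ht.1 hs.1
        rw [heq] at hsc
        exact lt_irrefl c hsc
    · left
      intro t ht
      rcases lt_or_gt_of_ne (hfne t ht) with h | h
      · exfalso
        have hsub : Set.Icc t b ⊆ Set.Icc c b := Set.Icc_subset_Icc ht.1.le (le_refl b)
        have hivt := intermediate_value_Icc ht.2 (hcont.mono hsub)
        have h0 : (0 : ℝ) ∈ Set.Icc (f t) (f b) := ⟨h.le, hbpos.le⟩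
        obtain ⟨s, hs, hfs⟩ := hivt h0
        have heq := huniq s (hsub hs) hfs
        have hsc : c < s := lt_of_lt_of_le ht.1 hs.1
        rw [heq] at hsc
        exact lt_irrefl c hsc
      · exact h
  rcases hsign with hp | hn
  · -- positive case
    apply newton_key f c b hcb hd1 hd2 hroot hcont hp _ _ x hx0 hrec
    · intro t ht
      have h1 := hff' t ht
      have h2 := hp t ht
      nlinarith
    · intro t ht
      have h1 := hff'' t ht
      have h2 := hp t (Set.Ioo_subset_Ioc_self ht)
      have h3 := div_nonneg h1 h2.le
      rwa [mul_div_cancel_left₀ _ h2.ne'] at h3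
  · -- negative case: apply the key lemma to -f
    have hdg : deriv (fun y => -f y) = fun y => -deriv f y := funext fun y => deriv.neg
    have hrec' : ∀ n, x (n + 1) = x n - (-f (x n)) / deriv (fun y => -f y) (x n) := by
      intro n
      rw [hdg, hrec n]
      simp [neg_div_neg_eq]
    apply newton_key (fun y => -f y) c b hcb
      (fun t ht => (hd1 t ht).neg)
      (fun t ht => by rw [hdg]; exact (hd2 t ht).neg)
      (by simp [hroot])
      (hcont.neg)
      (fun t ht => by simpa using (hn t ht))
      ?_ ?_ x hx0 hrec'
    · intro t ht
      rw [hdg]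
      have h1 := hff' t ht
      have h2 := hn t ht
      have h3 : deriv f t < 0 := by nlinarith
      show 0 < -deriv f t
      linarith
    · intro t ht
      rw [show deriv (deriv fun y => -f y) = deriv (fun y => -deriv f y) by rw [hdg]]
      have hd2' : deriv (fun y => -deriv f y) t = -deriv (deriv f) t := deriv.neg
      rw [hd2']
      have h1 := hff'' t ht
      have h2 := hn t (Set.Ioo_subset_Ioc_self ht)
      nlinarith
end

section
/- Under the hypotheses of Theorem 1 (f·f'' ≥ 0 on (a,c), f·f' < 0 on [a,c), f' ≠ 0, c unique root), the Newton-Raphson sequence starting at any x₀ ∈ [a,c] is monotonically nondecreasing and remains in [a,c]. -/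
lemma newton_aux (f : ℝ → ℝ) (a c : ℝ) (hac : a < c)
    (hconv : ConvexOn ℝ (Set.Icc a c) f)
    (hroot : f c = 0)
    (hpos : ∀ y ∈ Set.Ico a c, 0 < f y)
    (hneg : ∀ y ∈ Set.Ico a c, deriv f y < 0)
    (hdiff : ∀ y ∈ Set.Ico a c, DifferentiableAt ℝ f y)
    (x : ℕ → ℝ) (hx0 : x 0 ∈ Set.Icc a c)
    (hrec : ∀ n, x (n + 1) = x n - f (x n) / deriv f (x n)) :
    Monotone x ∧ ∀ n, x n ∈ Set.Icc a c := by
  have step : ∀ y ∈ Set.Icc a c,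
      y ≤ y - f y / deriv f y ∧ y - f y / deriv f y ∈ Set.Icc a c := by
    intro y hy
    rcases hy.2.lt_or_eq with hyc | hyc
    · have hyI : y ∈ Set.Ico a c := ⟨hy.1, hyc⟩
      have hF := hpos y hyI
      have hD := hneg y hyI
      have hslope := hconv.deriv_le_slope hy (Set.right_mem_Icc.2 hac.le) hyc (hdiff y hyI)
      rw [slope_def_field, hroot] at hslope
      have hcy : 0 < c - y := by linarith
      rw [le_div_iff₀ hcy] at hslope
      have hstep : f y / deriv f y < 0 := div_neg_of_pos_of_neg hF hD
      have hub : y - f y / deriv f y ≤ c := by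
        have h2 : y - c ≤ f y / deriv f y := by
          rw [le_div_iff_of_neg hD]
          nlinarith
        linarith
      exact ⟨by linarith, ⟨by linarith [hy.1], hub⟩⟩
    · subst hyc
      simp only [hroot, zero_div, sub_zero]
      exact ⟨le_refl _, hy⟩
  have hmem : ∀ n, x n ∈ Set.Icc a c := by
    intro n
    induction n with
    | zero => exact hx0
    | succ n ih => rw [hrec n]; exact (step _ ih).2
  refine ⟨monotone_nat_of_le_succ fun n => ?_, hmem⟩
  rw [hrec n]
  exact (step _ (hmem n)).1

theorem stmt9 (f : ℝ → ℝ) (a c : ℝ) (hac : a < c)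
    (hd1 : ∀ x ∈ Set.Ioo a c, DifferentiableAt ℝ f x)
    (hd2 : ∀ x ∈ Set.Ioo a c, DifferentiableAt ℝ (deriv f) x)
    (hroot : f c = 0)
    (huniq : ∀ x ∈ Set.Icc a c, f x = 0 → x = c)
    (hff'' : ∀ x ∈ Set.Ioo a c, 0 ≤ f x * deriv (deriv f) x)
    (hff' : ∀ x ∈ Set.Ico a c, f x * deriv f x < 0)
    (hne : ∀ x ∈ Set.Ioo a c, deriv f x ≠ 0)
    (ha : derivWithin f (Set.Ici a) a ≠ 0)
    (hc : derivWithin f (Set.Iic c) c ≠ 0)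
    (x : ℕ → ℝ) (hx0 : x 0 ∈ Set.Icc a c)
    (hrec : ∀ n, x (n + 1) = x n - f (x n) / deriv f (x n)) :
    Monotone x ∧ ∀ n, x n ∈ Set.Icc a c := by
  -- differentiability on [a, c)
  have hdIco : ∀ y ∈ Set.Ico a c, DifferentiableAt ℝ f y := by
    intro y hy
    rcases hy.1.lt_or_eq with h | h
    · exact hd1 y ⟨h, hy.2⟩
    · subst h
      by_contra hnd
      have h0 : deriv f a = 0 := deriv_zero_of_not_differentiableAt hnd
      have := hff' a hy
      rw [h0, mul_zero] at this
      exact lt_irrefl _ this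
  -- continuity on [a, c]
  have hcont : ContinuousOn f (Set.Icc a c) := by
    intro y hy
    rcases hy.2.lt_or_eq with h | h
    · exact ((hdIco y ⟨hy.1, h⟩).continuousAt).continuousWithinAt
    · subst h
      have hdw : DifferentiableWithinAt ℝ f (Set.Iic y) y := by
        by_contra hnd
        exact hc (derivWithin_zero_of_not_differentiableWithinAt hnd)
      exact hdw.continuousWithinAt.mono Set.Icc_subset_Iic_self
  -- f nonzero on [a, c)
  have hnz : ∀ y ∈ Set.Ico a c, f y ≠ 0 := by
    intro y hy h0
    exact hy.2.ne (huniq y ⟨hy.1, hy.2.le⟩ h0)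
  -- constant sign on [a, c)
  have hsign : (∀ y ∈ Set.Ico a c, 0 < f y) ∨ (∀ y ∈ Set.Ico a c, f y < 0) := by
    rcases (hnz a ⟨le_refl a, hac⟩).lt_or_gt with hfa | hfa
    · right
      intro y hy
      by_contra hle
      push_neg at hle
      have hylt : 0 < f y := lt_of_le_of_ne hle (Ne.symm (hnz y hy))
      have hay : a ≤ y := hy.1
      have hsub : Set.Icc a y ⊆ Set.Icc a c := Set.Icc_subset_Icc le_rfl hy.2.le
      have hiv := intermediate_value_Icc hay (hcont.mono hsub)
      have h0 : (0 : ℝ) ∈ Set.Icc (f a) (f y) := ⟨hfa.le, hylt.le⟩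
      obtain ⟨z, hz, hz0⟩ := hiv h0
      have := huniq z (hsub hz) hz0
      exact absurd (this ▸ hz.2) (not_le.2 hy.2)
    · left
      intro y hy
      by_contra hle
      push_neg at hle
      have hylt : f y < 0 := lt_of_le_of_ne hle (hnz y hy)
      have hay : a ≤ y := hy.1
      have hsub : Set.Icc a y ⊆ Set.Icc a c := Set.Icc_subset_Icc le_rfl hy.2.le
      have hiv := intermediate_value_Icc' hay (hcont.mono hsub)
      have h0 : (0 : ℝ) ∈ Set.Icc (f y) (f a) := ⟨hylt.le, hfa.le⟩
      obtain ⟨z, hz, hz0⟩ := hiv h0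
      have := huniq z (hsub hz) hz0
      exact absurd (this ▸ hz.2) (not_le.2 hy.2)
  rcases hsign with hP | hN
  · -- f > 0 on [a,c): f convex, f' < 0
    have hneg : ∀ y ∈ Set.Ico a c, deriv f y < 0 := by
      intro y hy
      by_contra hle
      push_neg at hle
      nlinarith [hff' y hy, hP y hy]
    have hconv : ConvexOn ℝ (Set.Icc a c) f := by
      apply convexOn_of_deriv2_nonneg (convex_Icc a c) hcont
      · rw [interior_Icc]; exact fun y hy => (hd1 y hy).differentiableWithinAt
      · rw [interior_Icc]; exact fun y hy => (hd2 y hy).differentiableWithinAt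
      · rw [interior_Icc]
        intro y hy
        have hfy : 0 < f y := hP y ⟨hy.1.le, hy.2⟩
        have h2 : 0 ≤ deriv (deriv f) y := by
          by_contra hle
          push_neg at hle
          nlinarith [hff'' y hy]
        simpa [Function.iterate_succ, Function.iterate_zero] using h2
    exact newton_aux f a c hac hconv hroot hP hneg hdIco x hx0 hrec
  · -- f < 0 on [a,c): apply aux to -f
    set g : ℝ → ℝ := fun t => -f t with hg
    have hgd : ∀ t, deriv g t = -deriv f t := fun t => deriv.neg
    have hgpos : ∀ y ∈ Set.Ico a c, 0 < g y := fun y hy => by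
      simpa [hg] using hN y hy
    have hfpos : ∀ y ∈ Set.Ico a c, 0 < deriv f y := by
      intro y hy
      by_contra hle
      push_neg at hle
      nlinarith [hff' y hy, hN y hy]
    have hgneg : ∀ y ∈ Set.Ico a c, deriv g y < 0 := by
      intro y hy
      rw [hgd]
      simpa using hfpos y hy
    have hgdiff : ∀ y ∈ Set.Ico a c, DifferentiableAt ℝ g y := fun y hy =>
      (hdIco y hy).neg
    have hgroot : g c = 0 := by simp [hg, hroot]
    have hgconv : ConvexOn ℝ (Set.Icc a c) g := by
      have hconc : ConcaveOn ℝ (Set.Icc a c) f := by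
        apply concaveOn_of_deriv2_nonpos (convex_Icc a c) hcont
        · rw [interior_Icc]; exact fun y hy => (hd1 y hy).differentiableWithinAt
        · rw [interior_Icc]; exact fun y hy => (hd2 y hy).differentiableWithinAt
        · rw [interior_Icc]
          intro y hy
          have hfy : f y < 0 := hN y ⟨hy.1.le, hy.2⟩
          have h2 : deriv (deriv f) y ≤ 0 := by
            by_contra hle
            push_neg at hle
            nlinarith [hff'' y hy]
          simpa [Function.iterate_succ, Function.iterate_zero] using h2
      exact hconc.neg
    have hgrec : ∀ n, x (n + 1) = x n - g (x n) / deriv g (x n) := by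
      intro n
      rw [hrec n]
      congr 1
      rw [hgd]
      simp [hg, neg_div_neg_eq]
    exact newton_aux g a c hac hgconv hgroot hgpos hgneg hgdiff x hx0 hgrec
end

section
/- For f(x) = x³ − 2x + 2, the Newton-Raphson sequence x_{n+1} = x_n − f(x_n)/f'(x_n) converges to the unique real root c of f for every initial point x₀ ≤ −2. -/
theorem stmt16 (c : ℝ) (hc : c ^ 3 - 2 * c + 2 = 0)
    (hcI : c ∈ Set.Ioo (-2 : ℝ) 0)
    (x : ℕ → ℝ) (hx0 : x 0 ≤ -2)
    (hrec : ∀ n, x (n + 1) = x n - (x n ^ 3 - 2 * x n + 2) / (3 * x n ^ 2 - 2)) :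
    Filter.Tendsto x Filter.atTop (nhds c) := by
  obtain ⟨hc2, hc0⟩ := hcI
  have hc1 : c < -1 := by
    by_contra h
    push_neg at h
    nlinarith [mul_nonneg (by linarith : (0:ℝ) ≤ c + 1)
      (by nlinarith [sq_nonneg (2*c - 1)] : (0:ℝ) ≤ c^2 - c + 1)]
  have hcsq : 1 < c ^ 2 := by nlinarith [sq_nonneg (c + 1)]
  -- invariant: x n ≤ c
  have hle : ∀ n, x n ≤ c := by
    intro n
    induction n with
    | zero => linarith
    | succ n ih =>
      have hd : (0:ℝ) < 3 * x n ^ 2 - 2 := by nlinarith [sq_nonneg (x n + 1)]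
      rw [hrec]
      have key : -(x n ^ 3 - 2 * x n + 2) ≤ (c - x n) * (3 * x n ^ 2 - 2) := by
        nlinarith [mul_nonneg (sq_nonneg (c - x n)) (by linarith : (0:ℝ) ≤ -(c + 2 * x n))]
      have : (x n ^ 3 - 2 * x n + 2) / (3 * x n ^ 2 - 2) ≥ -(c - x n) := by
        rw [ge_iff_le, le_div_iff₀ hd]
        nlinarith [key]
      linarith
  -- f(x n) ≤ 0
  have hfle : ∀ n, x n ^ 3 - 2 * x n + 2 ≤ 0 := by
    intro n
    have h1 : x n ≤ c := hle n
    have h2 : x n * c ≥ c ^ 2 := by nlinarith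
    have h3 : x n ^ 2 ≥ c ^ 2 := by nlinarith
    nlinarith [mul_nonneg (by linarith : (0:ℝ) ≤ c - x n)
      (by nlinarith : (0:ℝ) ≤ x n ^ 2 + x n * c + c ^ 2 - 2)]
  have hstep : ∀ n, x n ≤ x (n + 1) := by
    intro n
    have hd : (0:ℝ) < 3 * x n ^ 2 - 2 := by
      nlinarith [hle n, sq_nonneg (x n + 1)]
    rw [hrec]
    have : (x n ^ 3 - 2 * x n + 2) / (3 * x n ^ 2 - 2) ≤ 0 :=
      div_nonpos_of_nonpos_of_nonneg (hfle n) (le_of_lt hd)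
    linarith
  have hmono : Monotone x := monotone_nat_of_le_succ hstep
  have hbdd : BddAbove (Set.range x) := ⟨c, by rintro _ ⟨n, rfl⟩; exact hle n⟩
  have hL : Filter.Tendsto x Filter.atTop (nhds (⨆ n, x n)) :=
    tendsto_atTop_ciSup hmono hbdd
  set L := ⨆ n, x n with hLdef
  have hLle : L ≤ c := ciSup_le hle
  have hLsq : 1 < L ^ 2 := by nlinarith [sq_nonneg (L + 1)]
  have hdL : (0:ℝ) < 3 * L ^ 2 - 2 := by linarith
  have hne : (3 * L ^ 2 - 2 : ℝ) ≠ 0 := ne_of_gt hdL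
  have hL' : Filter.Tendsto (fun n => x (n + 1)) Filter.atTop (nhds L) :=
    hL.comp (Filter.tendsto_add_atTop_nat 1)
  have hnum : Filter.Tendsto (fun n => x n ^ 3 - 2 * x n + 2) Filter.atTop
      (nhds (L ^ 3 - 2 * L + 2)) := by
    have := ((hL.pow 3).sub (hL.const_mul 2)).add_const 2
    simpa [mul_comm] using this
  have hden : Filter.Tendsto (fun n => 3 * x n ^ 2 - 2) Filter.atTop
      (nhds (3 * L ^ 2 - 2)) := by
    have := ((hL.pow 2).const_mul 3).sub_const 2
    simpa using this
  have hg : Filter.Tendsto (fun n => x n - (x n ^ 3 - 2 * x n + 2) / (3 * x n ^ 2 - 2))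
      Filter.atTop (nhds (L - (L ^ 3 - 2 * L + 2) / (3 * L ^ 2 - 2))) :=
    hL.sub (hnum.div hden hne)
  have hg' : Filter.Tendsto (fun n => x (n + 1)) Filter.atTop
      (nhds (L - (L ^ 3 - 2 * L + 2) / (3 * L ^ 2 - 2))) := by
    simpa only [← hrec] using hg
  have heq : L = L - (L ^ 3 - 2 * L + 2) / (3 * L ^ 2 - 2) :=
    tendsto_nhds_unique hL' hg'
  have hdiv0 : (L ^ 3 - 2 * L + 2) / (3 * L ^ 2 - 2) = 0 := by linarith
  have hfL : L ^ 3 - 2 * L + 2 = 0 := by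
    rcases div_eq_zero_iff.mp hdiv0 with h | h
    · exact h
    · exact absurd h hne
  have hLc : L = c := by
    have h2 : L * c ≥ c ^ 2 := by nlinarith
    have h3 : L ^ 2 ≥ c ^ 2 := by nlinarith
    by_contra h
    have hlt : L < c := lt_of_le_of_ne hLle h
    nlinarith [mul_pos (by linarith : (0:ℝ) < c - L)
      (by nlinarith : (0:ℝ) < L ^ 2 + L * c + c ^ 2 - 2)]
  rw [hLc] at hL
  exact hL
end
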